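/- Let T > 0, let A ⊂ ℝ be compact, let k, θ, δ > 0, and consider the operator (ℒu)(t,a,x) = ∂_a u + k(θ − x)∂_x u + (δ²x(1−x)/2)∂²_{xx} u acting on functions on [0,T] × A × [0,1]. Let ν and μ be finite positive measures on [0,T] × A × [0,1], and let (m_t)_{t∈[0,T]} be a measurable family of finite positive measures on A × [0,1] with ∫_0^T m_t(A × [0,1]) dt < ∞, such that for every bounded function u on [0,T] × A × [0,1] that is C¹ in t, C¹ in a and C² in x with bounded derivatives, ∫ u dν + ∫_0^T ∫ (∂_t u + ℒu) dm_t dt = ∫ u dμ. Then for every bounded function h on [0,T] × A × [0,1] that is C¹ in t, C¹ in a and C² in x with bounded derivatives, and every ψ ∈ C¹([0,T]), one has |∫_0^T ψ′(t) (∫_{A×[0,1]} h(t,a,x) m_t(da,dx)) dt| ≤ C·‖ψ‖_∞, where C = ‖h‖_∞·(ν([0,T]×A×[0,1]) + μ([0,T]×A×[0,1])) + ‖∂_t h + ℒh‖_∞·∫_0^T m_t(A×[0,1]) dt. -/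

import Mathlib

open MeasureTheory Set

/-- Partial derivative in the time variable. -/
noncomputable def partialT (u : ℝ → ℝ → ℝ → ℝ) (t a x : ℝ) : ℝ :=
  deriv (fun s => u s a x) t

/-- Partial derivative in the age variable. -/
noncomputable def partialA (u : ℝ → ℝ → ℝ → ℝ) (t a x : ℝ) : ℝ :=
  deriv (fun b => u t b x) a

/-- Partial derivative in the state variable. -/
noncomputable def partialX (u : ℝ → ℝ → ℝ → ℝ) (t a x : ℝ) : ℝ :=
  deriv (fun y => u t a y) x

/-- Second partial derivative in the state variable. -/
noncomputable def partialXX (u : ℝ → ℝ → ℝ → ℝ) (t a x : ℝ) : ℝ :=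
  deriv (deriv (fun y => u t a y)) x

/-- The generator of the Jacobi capacity-factor diffusion extended by the age
derivative: `ℒu = ∂_a u + k(θ−x)∂_x u + (δ²x(1−x)/2)∂²_{xx} u`. -/
noncomputable def genL (k θ δ : ℝ) (u : ℝ → ℝ → ℝ → ℝ) (t a x : ℝ) : ℝ :=
  partialA u t a x + k * (θ - x) * partialX u t a x
    + δ ^ 2 * x * (1 - x) / 2 * partialXX u t a x

/-- The class `C^{1,1,2}_b`: bounded, `C¹` in `t`, `C¹` in `a`, `C²` in `x`,
with bounded partial derivatives. -/
def IsC112b (u : ℝ → ℝ → ℝ → ℝ) : Prop :=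
  (∀ a x, ContDiff ℝ 1 fun t => u t a x) ∧
  (∀ t x, ContDiff ℝ 1 fun a => u t a x) ∧
  (∀ t a, ContDiff ℝ 2 fun y => u t a y) ∧
  ∃ C : ℝ, ∀ t a x : ℝ, |u t a x| ≤ C ∧ |partialT u t a x| ≤ C ∧
      |partialA u t a x| ≤ C ∧ |partialX u t a x| ≤ C ∧ |partialXX u t a x| ≤ C

/-!
Test the linear programming constraint against `u = Ψ h`, where `Ψ` is a compactly supported
`C¹` function that agrees with `ψ` near `[0, T]`; the cut-off is what makes `u` bounded. Since
`∂ₜu + ℒu = Ψ' h + Ψ (∂ₜh + ℒh)`, the constraint expresses `∫ ψ'(t) ∫ h dmₜ dt` as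
`∫ u dμ - ∫ u dν - ∫ ψ(t) ∫ (∂ₜh + ℒh) dmₜ dt`, and each of these three terms is bounded by
`‖ψ‖_∞` times the corresponding part of the constant.
-/

open Filter Topology ProbabilityTheory

lemma abs_mul_le_of_le {a b A B : ℝ} (ha : |a| ≤ A) (hb : |b| ≤ B) : |a * b| ≤ A * B :=
  abs_mul a b ▸ mul_le_mul ha hb (abs_nonneg b) ((abs_nonneg a).trans ha)

lemma ProbabilityTheory.Kernel.isSFiniteKernel_of_forall_isFiniteMeasure
    {α β : Type*} [MeasurableSpace α] [MeasurableSpace β] (κ : Kernel α β)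
    (hκ : ∀ a, IsFiniteMeasure (κ a)) : IsSFiniteKernel κ := by
  classical
  -- split `α` according to the integer part of the total mass
  set n : α → ℕ := fun a => ⌊(κ a univ).toReal⌋₊
  have hs : ∀ j, MeasurableSet (n ⁻¹' {j}) := fun j =>
    (Nat.measurable_floor.comp (κ.measurable_coe .univ).ennreal_toReal) (measurableSet_singleton j)
  refine ⟨⟨fun j => κ.piecewise (hs j) 0, fun j => ⟨⟨j + 1, by simp, fun a => ?_⟩⟩, ?_⟩⟩
  · rw [Kernel.piecewise_apply]
    split_ifs with ha
    · rw [← ENNReal.ofReal_toReal (measure_ne_top (κ a) univ), ← ha]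
      exact (ENNReal.ofReal_le_ofReal (Nat.lt_floor_add_one _).le).trans_eq (by norm_cast)
    · simp
  · ext a s hs'
    rw [Kernel.sum_apply' _ _ hs', tsum_eq_single (n a) fun j hj => ?_]
    · simp [Kernel.piecewise_apply]
    · simp [Kernel.piecewise_apply, Ne.symm hj]

lemma measurable_deriv_of_measurable_uncurry {α : Type*} [MeasurableSpace α] {f : α → ℝ → ℝ}
    (hf : Measurable (Function.uncurry f)) (hd : ∀ a x, DifferentiableAt ℝ (f a) x) :
    Measurable fun p : α × ℝ => deriv (f p.1) p.2 := by
  have hseq : Tendsto (fun n : ℕ => (n : ℝ)⁻¹) atTop (𝓝[>] 0) :=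
    tendsto_inv_atTop_nhdsGT_zero.comp tendsto_natCast_atTop_atTop
  refine measurable_of_tendsto_metrizable (f := fun (n : ℕ) (p : α × ℝ) =>
      ((n : ℝ)⁻¹)⁻¹ * (f p.1 (p.2 + (n : ℝ)⁻¹) - f p.1 p.2)) (fun n => ?_)
    (tendsto_pi_nhds.2 fun p => ((hd p.1 p.2).hasDerivAt.tendsto_slope_zero_right).comp hseq)
  exact measurable_const.mul
    ((hf.comp (measurable_fst.prodMk (measurable_snd.add_const _))).sub hf)

lemma exists_contDiff_hasCompactSupport_eventuallyEq {E F : Type*} [NormedAddCommGroup E]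
    [NormedSpace ℝ E] [FiniteDimensional ℝ E] [HasContDiffBump E] [NormedAddCommGroup F]
    [NormedSpace ℝ F] {n : ℕ∞} {ψ : E → F} (hψ : ContDiff ℝ n ψ) {K : Set E} (hK : IsCompact K) :
    ∃ Ψ : E → F, ContDiff ℝ n Ψ ∧ HasCompactSupport Ψ ∧ ∀ t ∈ K, Ψ =ᶠ[𝓝 t] ψ := by
  obtain ⟨r, hr, hKr⟩ := hK.isBounded.subset_ball_lt 0 0
  let χ : ContDiffBump (0 : E) := ⟨r, r + 1, hr, by linarith⟩
  refine ⟨fun t => χ t • ψ t, χ.contDiff.smul hψ, χ.hasCompactSupport.smul_right,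
    fun t ht => ?_⟩
  filter_upwards [Metric.isOpen_ball.mem_nhds (hKr ht)] with s hs
  rw [χ.one_of_mem_closedBall (Metric.ball_subset_closedBall hs), one_smul]

namespace IsC112b

variable {u : ℝ → ℝ → ℝ → ℝ}

lemma measurable_slice (hu : IsC112b u) (t : ℝ) : Measurable fun p : ℝ × ℝ => u t p.1 p.2 :=
  measurable_uncurry_of_continuous_of_measurable (u := fun a x => u t a x)
    (fun x => (hu.2.1 t x).continuous) (fun a => (hu.2.2.1 t a).continuous.measurable)

protected lemma measurable (hu : IsC112b u) :
    Measurable fun q : ℝ × ℝ × ℝ => u q.1 q.2.1 q.2.2 :=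
  measurable_uncurry_of_continuous_of_measurable (u := fun t (p : ℝ × ℝ) => u t p.1 p.2)
    (fun p => (hu.1 p.1 p.2).continuous) hu.measurable_slice

lemma measurable_partialT (hu : IsC112b u) :
    Measurable fun q : ℝ × ℝ × ℝ => partialT u q.1 q.2.1 q.2.2 :=
  (measurable_deriv_of_measurable_uncurry (f := fun (p : ℝ × ℝ) t => u t p.1 p.2)
    (hu.measurable.comp (measurable_snd.prodMk measurable_fst))
    fun p _ => (hu.1 p.1 p.2).differentiable one_ne_zero _).comp
      (measurable_snd.prodMk measurable_fst)

lemma measurable_partialA (hu : IsC112b u) :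
    Measurable fun q : ℝ × ℝ × ℝ => partialA u q.1 q.2.1 q.2.2 :=
  (measurable_deriv_of_measurable_uncurry (f := fun (p : ℝ × ℝ) a => u p.1 a p.2)
    (hu.measurable.comp (measurable_fst.fst.prodMk (measurable_snd.prodMk measurable_fst.snd)))
    fun p _ => (hu.2.1 p.1 p.2).differentiable one_ne_zero _).comp
      ((measurable_fst.prodMk measurable_snd.snd).prodMk measurable_snd.fst)

lemma measurable_partialX (hu : IsC112b u) :
    Measurable fun q : ℝ × ℝ × ℝ => partialX u q.1 q.2.1 q.2.2 :=
  (measurable_deriv_of_measurable_uncurry (f := fun (p : ℝ × ℝ) x => u p.1 p.2 x)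
    (hu.measurable.comp (measurable_fst.fst.prodMk (measurable_fst.snd.prodMk measurable_snd)))
    fun p _ => (hu.2.2.1 p.1 p.2).differentiable two_ne_zero _).comp
      ((measurable_fst.prodMk measurable_snd.fst).prodMk measurable_snd.snd)

lemma measurable_partialXX (hu : IsC112b u) :
    Measurable fun q : ℝ × ℝ × ℝ => partialXX u q.1 q.2.1 q.2.2 :=
  (measurable_deriv_of_measurable_uncurry (f := fun (p : ℝ × ℝ) => deriv fun y => u p.1 p.2 y)
    (hu.measurable_partialX.comp
      (measurable_fst.fst.prodMk (measurable_fst.snd.prodMk measurable_snd)))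
    fun p _ => ((hu.2.2.1 p.1 p.2).deriv' (n := 1)).differentiable one_ne_zero _).comp
      ((measurable_fst.prodMk measurable_snd.fst).prodMk measurable_snd.snd)

lemma measurable_partialT_add_genL (hu : IsC112b u) (k θ δ : ℝ) :
    Measurable fun q : ℝ × ℝ × ℝ => partialT u q.1 q.2.1 q.2.2 + genL k θ δ u q.1 q.2.1 q.2.2 :=
  hu.measurable_partialT.add <| (hu.measurable_partialA.add <|
    (measurable_const.mul (measurable_const.sub measurable_snd.snd)).mul
      hu.measurable_partialX).add <|
    ((measurable_const.mul measurable_snd.snd).mul (measurable_const.sub measurable_snd.snd)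
      |>.div_const _).mul hu.measurable_partialXX

end IsC112b

section TimeCutoff

variable {Ψ : ℝ → ℝ} {h : ℝ → ℝ → ℝ → ℝ}

lemma partialT_mul_left (hΨ : Differentiable ℝ Ψ) (hh : IsC112b h) (t a x : ℝ) :
    partialT (fun t a x => Ψ t * h t a x) t a x
      = deriv Ψ t * h t a x + Ψ t * partialT h t a x :=
  deriv_mul (hΨ t) ((hh.1 a x).differentiable one_ne_zero t)

lemma partialA_mul_left (t a x : ℝ) :
    partialA (fun t a x => Ψ t * h t a x) t a x = Ψ t * partialA h t a x :=
  congrFun (deriv_const_mul_field' _) a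

lemma partialX_mul_left (t a x : ℝ) :
    partialX (fun t a x => Ψ t * h t a x) t a x = Ψ t * partialX h t a x :=
  congrFun (deriv_const_mul_field' _) x

lemma partialXX_mul_left (t a x : ℝ) :
    partialXX (fun t a x => Ψ t * h t a x) t a x = Ψ t * partialXX h t a x := by
  simp only [partialXX, deriv_const_mul_field']

lemma partialT_add_genL_mul_left (hΨ : Differentiable ℝ Ψ) (hh : IsC112b h) (k θ δ t a x : ℝ) :
    partialT (fun t a x => Ψ t * h t a x) t a x + genL k θ δ (fun t a x => Ψ t * h t a x) t a x
      = deriv Ψ t * h t a x + Ψ t * (partialT h t a x + genL k θ δ h t a x) := by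
  simp only [genL, partialT_mul_left hΨ hh, partialA_mul_left, partialX_mul_left,
    partialXX_mul_left]
  ring

lemma IsC112b.mul_left (hΨ : ContDiff ℝ 1 Ψ) (hΨb : ∃ C, ∀ t, |Ψ t| ≤ C)
    (hΨ'b : ∃ C, ∀ t, |deriv Ψ t| ≤ C) (hh : IsC112b h) :
    IsC112b fun t a x => Ψ t * h t a x := by
  obtain ⟨C₀, hC₀⟩ := hΨb
  obtain ⟨C₁, hC₁⟩ := hΨ'b
  obtain ⟨C, hC⟩ := hh.2.2.2
  have hC₁0 : 0 ≤ C₁ := (abs_nonneg _).trans (hC₁ 0)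
  have hC0 : 0 ≤ C := (abs_nonneg _).trans (hC 0 0 0).1
  have hle : C₀ * C ≤ C₁ * C + C₀ * C := le_add_of_nonneg_left (by positivity)
  refine ⟨fun a x => hΨ.mul (hh.1 a x), fun t x => contDiff_const.mul (hh.2.1 t x),
    fun t a => contDiff_const.mul (hh.2.2.1 t a), C₁ * C + C₀ * C, fun t a x => ?_⟩
  obtain ⟨h0, hT, hA, hX, hXX⟩ := hC t a x
  rw [partialT_mul_left (hΨ.differentiable one_ne_zero) hh, partialA_mul_left,
    partialX_mul_left, partialXX_mul_left]
  exact ⟨(abs_mul_le_of_le (hC₀ t) h0).trans hle,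
    (abs_add_le _ _).trans (add_le_add (abs_mul_le_of_le (hC₁ t) h0) (abs_mul_le_of_le (hC₀ t) hT)),
    (abs_mul_le_of_le (hC₀ t) hA).trans hle, (abs_mul_le_of_le (hC₀ t) hX).trans hle,
    (abs_mul_le_of_le (hC₀ t) hXX).trans hle⟩

end TimeCutoff

section KernelIntegral

variable {α β : Type*} [MeasurableSpace α] [MeasurableSpace β] {ρ : Measure α}
  {m : Kernel α β} {I : Set α} {S : Set β}

lemma abs_setIntegral_le_of_abs_le {μ : Measure β} [IsFiniteMeasure μ] {f : β → ℝ} {M : ℝ}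
    (hfM : ∀ p ∈ S, |f p| ≤ M) : |∫ p in S, f p ∂μ| ≤ M * (μ S).toReal :=
  norm_setIntegral_le_of_norm_le_const (f := f) (C := M) (measure_lt_top μ S) hfM

lemma integrableOn_setIntegral_kernel (hmfin : ∀ t, IsFiniteMeasure (m t))
    (hI : MeasurableSet I) (hS : MeasurableSet S) (hmint : ∫⁻ t in I, m t S ∂ρ < ⊤)
    {f : α → β → ℝ} (hf : Measurable (Function.uncurry f)) {M : ℝ}
    (hfM : ∀ t ∈ I, ∀ p ∈ S, |f t p| ≤ M) :
    IntegrableOn (fun t => ∫ p in S, f t p ∂m t) I ρ := by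
  have := m.isSFiniteKernel_of_forall_isFiniteMeasure hmfin
  have hmeas : StronglyMeasurable fun t => ∫ p in S, f t p ∂m t := by
    simpa only [Kernel.restrict_apply, Function.uncurry_apply_pair] using
      hf.stronglyMeasurable.integral_kernel_prod_right' (κ := m.restrict hS)
  refine ((integrable_toReal_of_lintegral_ne_top (m.measurable_coe hS).aemeasurable
    hmint.ne).const_mul M).mono' hmeas.aestronglyMeasurable
    ((ae_restrict_iff' hI).2 (Eventually.of_forall fun t ht => ?_))
  exact abs_setIntegral_le_of_abs_le (hfM t ht)

lemma setIntegral_setIntegral_kernel_add (hmfin : ∀ t, IsFiniteMeasure (m t))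
    (hI : MeasurableSet I) (hS : MeasurableSet S) (hmint : ∫⁻ t in I, m t S ∂ρ < ⊤)
    {f g : α → β → ℝ} (hf : Measurable (Function.uncurry f))
    (hg : Measurable (Function.uncurry g)) {Mf Mg : ℝ} (hfM : ∀ t ∈ I, ∀ p ∈ S, |f t p| ≤ Mf)
    (hgM : ∀ t ∈ I, ∀ p ∈ S, |g t p| ≤ Mg) :
    ∫ t in I, ∫ p in S, (f t p + g t p) ∂m t ∂ρ
      = ∫ t in I, ∫ p in S, f t p ∂m t ∂ρ + ∫ t in I, ∫ p in S, g t p ∂m t ∂ρ := by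
  have inner : ∀ {F : α → β → ℝ} {M : ℝ}, Measurable (Function.uncurry F) →
      (∀ t ∈ I, ∀ p ∈ S, |F t p| ≤ M) → ∀ t ∈ I, IntegrableOn (F t) S (m t) :=
    fun hF hFM t ht => IntegrableOn.of_bound (measure_lt_top _ _)
      hF.of_uncurry_left.aestronglyMeasurable _
      ((ae_restrict_iff' hS).2 (Eventually.of_forall (hFM t ht)))
  rw [← integral_add (integrableOn_setIntegral_kernel hmfin hI hS hmint hf hfM)
    (integrableOn_setIntegral_kernel hmfin hI hS hmint hg hgM)]
  exact setIntegral_congr_fun hI fun t ht => integral_add (inner hf hfM t ht) (inner hg hgM t ht)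

lemma abs_setIntegral_mul_setIntegral_kernel_le (hmfin : ∀ t, IsFiniteMeasure (m t))
    (hI : MeasurableSet I) (hS : MeasurableSet S) (hmint : ∫⁻ t in I, m t S ∂ρ < ⊤)
    {φ : α → ℝ} {f : α → β → ℝ} {Mφ Mf : ℝ} (hφM : ∀ t ∈ I, |φ t| ≤ Mφ)
    (hfM : ∀ t ∈ I, ∀ p ∈ S, |f t p| ≤ Mf) :
    |∫ t in I, φ t * ∫ p in S, f t p ∂m t ∂ρ| ≤ Mφ * (Mf * ∫ t in I, (m t S).toReal ∂ρ) := by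
  have hw := integrable_toReal_of_lintegral_ne_top (m.measurable_coe hS).aemeasurable hmint.ne
  rw [← integral_const_mul Mf, ← integral_const_mul Mφ, ← Real.norm_eq_abs]
  refine norm_integral_le_of_norm_le ((hw.const_mul Mf).const_mul Mφ)
    ((ae_restrict_iff' hI).2 (Eventually.of_forall fun t ht => ?_))
  exact abs_mul_le_of_le (hφM t ht) (abs_setIntegral_le_of_abs_le (hfM t ht))

end KernelIntegral

lemma setIntegral_partialT_add_genL_mul_left {m : Kernel ℝ (ℝ × ℝ)}
    (hmfin : ∀ t, IsFiniteMeasure (m t)) {I : Set ℝ} {S : Set (ℝ × ℝ)} (hI : MeasurableSet I)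
    (hS : MeasurableSet S) (hmint : ∫⁻ t in I, m t S < ⊤) {h : ℝ → ℝ → ℝ → ℝ} (hh : IsC112b h)
    {Ψ ψ : ℝ → ℝ} (hΨ : ContDiff ℝ 1 Ψ) (hΨb : ∃ C, ∀ t, |Ψ t| ≤ C)
    (hΨ'b : ∃ C, ∀ t, |deriv Ψ t| ≤ C) (hΨψ : ∀ t ∈ I, Ψ =ᶠ[𝓝 t] ψ) (k θ δ : ℝ) {Mg : ℝ}
    (hMg : ∀ t ∈ I, ∀ p ∈ S, |partialT h t p.1 p.2 + genL k θ δ h t p.1 p.2| ≤ Mg) :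
    ∫ t in I, ∫ p in S, (partialT (fun t a x => Ψ t * h t a x) t p.1 p.2
        + genL k θ δ (fun t a x => Ψ t * h t a x) t p.1 p.2) ∂m t
      = (∫ t in I, deriv ψ t * ∫ p in S, h t p.1 p.2 ∂m t)
        + ∫ t in I, ψ t * ∫ p in S, (partialT h t p.1 p.2 + genL k θ δ h t p.1 p.2) ∂m t := by
  obtain ⟨C₀, hC₀⟩ := hΨb
  obtain ⟨C₁, hC₁⟩ := hΨ'b
  obtain ⟨C, hC⟩ := hh.2.2.2
  simp_rw [partialT_add_genL_mul_left (hΨ.differentiable one_ne_zero) hh]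
  rw [setIntegral_setIntegral_kernel_add hmfin hI hS hmint
    (f := fun t p => deriv Ψ t * h t p.1 p.2)
    (g := fun t p => Ψ t * (partialT h t p.1 p.2 + genL k θ δ h t p.1 p.2))
    (((hΨ.continuous_deriv le_rfl).measurable.comp measurable_fst).mul hh.measurable)
    (hΨ.continuous.measurable.comp measurable_fst |>.mul (hh.measurable_partialT_add_genL k θ δ))
    (Mf := C₁ * C) (Mg := C₀ * Mg) ?_ ?_]
  · simp only [integral_const_mul]
    refine congrArg₂ (· + ·) (setIntegral_congr_fun hI fun t ht => ?_)
      (setIntegral_congr_fun hI fun t ht => ?_)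
    · rw [(hΨψ t ht).deriv_eq]
    · rw [(hΨψ t ht).eq_of_nhds]
  · exact fun t _ p _ => abs_mul_le_of_le (hC₁ t) (hC t p.1 p.2).1
  · exact fun t ht p hp => abs_mul_le_of_le (hC₀ t) (hMg t ht p hp)

theorem stmt_11_general (T k θ δ : ℝ)
    (A : Set ℝ) (hA : IsCompact A)
    (ν μ : Measure (ℝ × ℝ × ℝ)) [IsFiniteMeasure ν] [IsFiniteMeasure μ]
    (m : ProbabilityTheory.Kernel ℝ (ℝ × ℝ)) (hmfin : ∀ t, IsFiniteMeasure (m t))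
    (hmint : ∫⁻ t in Icc (0:ℝ) T, m t (A ×ˢ Icc (0:ℝ) 1) < ⊤)
    (hLP : ∀ u : ℝ → ℝ → ℝ → ℝ, IsC112b u →
      (∫ p in Icc (0:ℝ) T ×ˢ A ×ˢ Icc (0:ℝ) 1, u p.1 p.2.1 p.2.2 ∂ν)
        + (∫ t in Icc (0:ℝ) T, ∫ p in A ×ˢ Icc (0:ℝ) 1,
            (partialT u t p.1 p.2 + genL k θ δ u t p.1 p.2) ∂(m t))
        = ∫ p in Icc (0:ℝ) T ×ˢ A ×ˢ Icc (0:ℝ) 1, u p.1 p.2.1 p.2.2 ∂μ) :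
    ∀ h : ℝ → ℝ → ℝ → ℝ, IsC112b h →
    ∀ ψ : ℝ → ℝ, ContDiff ℝ 1 ψ →
    ∀ Mh Mg Mψ : ℝ,
      (∀ t ∈ Icc (0:ℝ) T, ∀ a ∈ A, ∀ x ∈ Icc (0:ℝ) 1, |h t a x| ≤ Mh) →
      (∀ t ∈ Icc (0:ℝ) T, ∀ a ∈ A, ∀ x ∈ Icc (0:ℝ) 1,
          |partialT h t a x + genL k θ δ h t a x| ≤ Mg) →
      (∀ t ∈ Icc (0:ℝ) T, |ψ t| ≤ Mψ) →
      |∫ t in Icc (0:ℝ) T,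
          deriv ψ t * ∫ p in A ×ˢ Icc (0:ℝ) 1, h t p.1 p.2 ∂(m t)|
        ≤ (Mh * ((ν (Icc (0:ℝ) T ×ˢ A ×ˢ Icc (0:ℝ) 1)).toReal
              + (μ (Icc (0:ℝ) T ×ˢ A ×ˢ Icc (0:ℝ) 1)).toReal)
            + Mg * ∫ t in Icc (0:ℝ) T, (m t (A ×ˢ Icc (0:ℝ) 1)).toReal) * Mψ := by
  intro h hh ψ hψ Mh Mg Mψ hMh hMg hMψ
  have hS : MeasurableSet (A ×ˢ Icc (0:ℝ) 1) := hA.isClosed.measurableSet.prod measurableSet_Icc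
  have hMg' : ∀ t ∈ Icc (0:ℝ) T, ∀ p ∈ A ×ˢ Icc (0:ℝ) 1,
      |partialT h t p.1 p.2 + genL k θ δ h t p.1 p.2| ≤ Mg := fun t ht p hp =>
    hMg t ht p.1 hp.1 p.2 hp.2
  obtain ⟨Ψ, hΨ, hΨc, hΨψ⟩ := exists_contDiff_hasCompactSupport_eventuallyEq hψ
    (isCompact_Icc (a := (0:ℝ)) (b := T))
  have hΨb : ∃ C, ∀ t, |Ψ t| ≤ C := hΨ.continuous.bounded_above_of_compact_support hΨc
  have hΨ'b : ∃ C, ∀ t, |deriv Ψ t| ≤ C :=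
    (hΨ.continuous_deriv le_rfl).bounded_above_of_compact_support hΨc.deriv
  have hLPΨ := hLP _ (hh.mul_left hΨ hΨb hΨ'b)
  rw [setIntegral_partialT_add_genL_mul_left hmfin measurableSet_Icc hS hmint hh hΨ hΨb hΨ'b
    hΨψ k θ δ hMg'] at hLPΨ
  have boundary : ∀ (ρ : Measure (ℝ × ℝ × ℝ)) [IsFiniteMeasure ρ],
      |∫ q in Icc (0:ℝ) T ×ˢ A ×ˢ Icc (0:ℝ) 1, Ψ q.1 * h q.1 q.2.1 q.2.2 ∂ρ|
        ≤ Mψ * Mh * (ρ (Icc (0:ℝ) T ×ˢ A ×ˢ Icc (0:ℝ) 1)).toReal := fun ρ _ =>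
    abs_setIntegral_le_of_abs_le fun q ⟨ht, ha, hx⟩ => by
      rw [(hΨψ q.1 ht).eq_of_nhds]
      exact abs_mul_le_of_le (hMψ _ ht) (hMh _ ht _ ha _ hx)
  have generator : |∫ t in Icc (0:ℝ) T,
      ψ t * ∫ p in A ×ˢ Icc (0:ℝ) 1, (partialT h t p.1 p.2 + genL k θ δ h t p.1 p.2) ∂m t|
        ≤ Mψ * (Mg * ∫ t in Icc (0:ℝ) T, (m t (A ×ˢ Icc (0:ℝ) 1)).toReal) :=
    abs_setIntegral_mul_setIntegral_kernel_le hmfin measurableSet_Icc hS hmint hMψ hMg'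
  have hν := boundary ν
  have hμ := boundary μ
  rw [abs_le] at hν hμ generator ⊢
  constructor <;> linarith

/-- Bounded variation lemma for renewable producers: under the linear programming
constraint linking the entry measure `ν`, the occupation measure flow `m` and the
exit measure `μ`, the map `t ↦ ∫ h dm_t` has the stated bounded variation property. -/
theorem stmt_11 (T k θ δ : ℝ) (hT : 0 < T) (hk : 0 < k) (hθ : 0 < θ) (hδ : 0 < δ)
    (A : Set ℝ) (hA : IsCompact A)
    (ν μ : Measure (ℝ × ℝ × ℝ)) [IsFiniteMeasure ν] [IsFiniteMeasure μ]
    (m : ProbabilityTheory.Kernel ℝ (ℝ × ℝ)) (hmfin : ∀ t, IsFiniteMeasure (m t))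
    (hmint : ∫⁻ t in Icc (0:ℝ) T, m t (A ×ˢ Icc (0:ℝ) 1) < ⊤)
    (hLP : ∀ u : ℝ → ℝ → ℝ → ℝ, IsC112b u →
      (∫ p in Icc (0:ℝ) T ×ˢ A ×ˢ Icc (0:ℝ) 1, u p.1 p.2.1 p.2.2 ∂ν)
        + (∫ t in Icc (0:ℝ) T, ∫ p in A ×ˢ Icc (0:ℝ) 1,
            (partialT u t p.1 p.2 + genL k θ δ u t p.1 p.2) ∂(m t))
        = ∫ p in Icc (0:ℝ) T ×ˢ A ×ˢ Icc (0:ℝ) 1, u p.1 p.2.1 p.2.2 ∂μ) :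
    ∀ h : ℝ → ℝ → ℝ → ℝ, IsC112b h →
    ∀ ψ : ℝ → ℝ, ContDiff ℝ 1 ψ →
    ∀ Mh Mg Mψ : ℝ,
      (∀ t ∈ Icc (0:ℝ) T, ∀ a ∈ A, ∀ x ∈ Icc (0:ℝ) 1, |h t a x| ≤ Mh) →
      (∀ t ∈ Icc (0:ℝ) T, ∀ a ∈ A, ∀ x ∈ Icc (0:ℝ) 1,
          |partialT h t a x + genL k θ δ h t a x| ≤ Mg) →
      (∀ t ∈ Icc (0:ℝ) T, |ψ t| ≤ Mψ) →
      |∫ t in Icc (0:ℝ) T,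
          deriv ψ t * ∫ p in A ×ˢ Icc (0:ℝ) 1, h t p.1 p.2 ∂(m t)|
        ≤ (Mh * ((ν (Icc (0:ℝ) T ×ˢ A ×ˢ Icc (0:ℝ) 1)).toReal
              + (μ (Icc (0:ℝ) T ×ˢ A ×ˢ Icc (0:ℝ) 1)).toReal)
            + Mg * ∫ t in Icc (0:ℝ) T, (m t (A ×ˢ Icc (0:ℝ) 1)).toReal) * Mψ :=
  stmt_11_general T k θ δ A hA ν μ m hmfin hmint hLP
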